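/- Let λ be a self-conjugate partition (λ = λ†). Then i₁(λ) = (|λ| − rank(λ))/2, where rank(λ) = #{i : λ_i ≥ i} is the number of boxes on the main diagonal of the Young diagram of λ. -/

import Mathlib

/-!
Let `λ = λ†` and `ℓ = ℓ(λ) = λ₁`. If `λ/ν` contains no 2×2 square then `ν_i ≥ λ_{i+1} - 1` for
all `i`, i.e. `ν` contains `λ` with its first row and column deleted; the skew shape between the
two is the rim of `λ`, with `λ₁ + ℓ - 1 = 2ℓ - 1` boxes. So the only border strip of size `2ℓ - 1`
is the whole rim: it spans `ℓ` columns and leaves a self-conjugate partition of size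
`|λ| - (2ℓ - 1)` and rank `rank λ - 1`. Hence `i₁(λ) = (ℓ - 1) + i₁(ν)`, and induction on `|λ|`
gives `2 i₁(λ) = |λ| - rank λ`.
-/

/-- A partition: a weakly decreasing sequence of nonnegative integers, indexed starting at 1
(`f 0 = 0` by convention), with finitely many nonzero terms. `f i` is the part `λ_i`. -/
structure YPartition where
  f : ℕ → ℕ
  f_zero : f 0 = 0
  antitone : ∀ ⦃i j : ℕ⦄, 1 ≤ i → i ≤ j → f j ≤ f i
  ev_zero : ∃ N, ∀ i, N ≤ i → f i = 0

namespace YPartition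

/-- The number of nonzero parts `ℓ(λ)`. -/
noncomputable def len (p : YPartition) : ℕ := sSup {i | p.f i ≠ 0}

/-- The size `|λ| = Σ_i λ_i`. -/
noncomputable def size (p : YPartition) : ℕ := ∑ᶠ i, p.f i

/-- The transpose (conjugate): `g† j = #{i ≥ 1 : g i ≥ j}`. -/
noncomputable def conjFun (g : ℕ → ℕ) (j : ℕ) : ℕ := Set.ncard {i | 1 ≤ i ∧ j ≤ g i}

/-- Containment of partitions: `ν ⊆ μ`. -/
def Sub (ν μ : YPartition) : Prop := ∀ i, ν.f i ≤ μ.f i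

/-- The cells (boxes) of the skew diagram `μ/ν`: pairs `(i,j)` with `i ≥ 1` and
`ν_i < j ≤ μ_i`. -/
def cells (μ ν : YPartition) : Set (ℕ × ℕ) :=
  {c | 1 ≤ c.1 ∧ ν.f c.1 < c.2 ∧ c.2 ≤ μ.f c.1}

/-- Two boxes share an edge. -/
def Adj (a b : ℕ × ℕ) : Prop :=
  (a.1 = b.1 ∧ (a.2 + 1 = b.2 ∨ b.2 + 1 = a.2)) ∨
  (a.2 = b.2 ∧ (a.1 + 1 = b.1 ∨ b.1 + 1 = a.1))

/-- A set of boxes is connected if any two of its boxes are joined by a chain of its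
boxes, each sharing an edge with the next. -/
def IsConnected (s : Set (ℕ × ℕ)) : Prop :=
  ∀ a ∈ s, ∀ b ∈ s, Relation.ReflTransGen (fun x y => x ∈ s ∧ y ∈ s ∧ Adj x y) a b

/-- `μ/ν` is a border strip: `ν ⊆ μ`, and the skew diagram is nonempty, connected,
and contains no 2×2 square. -/
def IsBorderStrip (μ ν : YPartition) : Prop :=
  Sub ν μ ∧ (cells μ ν).Nonempty ∧ IsConnected (cells μ ν) ∧
    ¬ ∃ i j : ℕ, (i, j) ∈ cells μ ν ∧ (i + 1, j) ∈ cells μ ν ∧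
      (i, j + 1) ∈ cells μ ν ∧ (i + 1, j + 1) ∈ cells μ ν

/-- The number of boxes of `μ/ν`. -/
noncomputable def stripSize (μ ν : YPartition) : ℕ := (cells μ ν).ncard

/-- The number of rows that `μ/ν` occupies. -/
noncomputable def rows (μ ν : YPartition) : ℕ := (Prod.fst '' cells μ ν).ncard

/-- The number of columns that `μ/ν` occupies. -/
noncomputable def cols (μ ν : YPartition) : ℕ := (Prod.snd '' cells μ ν).ncard

/-- The graph of the symplectic modification rule: `ModRule n μ i τ` holds iff
`i_{2n}(μ) = i < ∞` and `τ_{2n}(μ) = τ`. -/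
inductive ModRule (n : ℕ) : YPartition → ℕ → YPartition → Prop
  | base (μ : YPartition) (h : μ.len ≤ n) : ModRule n μ 0 μ
  | step (μ ν τ : YPartition) (i : ℕ)
      (hlen : n < μ.len)
      (hbs : IsBorderStrip μ ν)
      (hsize : stripSize μ ν = 2 * (μ.len - n - 1))
      (hbox : (μ.len, 1) ∈ cells μ ν)
      (hrec : ModRule n ν i τ) :
      ModRule n μ (cols μ ν + i) τ

/-- `i_{2n}(μ) ∈ ℕ∞`; it is `⊤ = ∞` exactly when the modification rule fails. -/
noncomputable def i2 (n : ℕ) (μ : YPartition) : ℕ∞ :=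
  sInf {c | ∃ i τ, ModRule n μ i τ ∧ c = (i : ℕ∞)}

-- `τ_{2n}(μ)`, defined (arbitrarily, as `μ` itself) when `i_{2n}(μ) = ∞`.
open Classical in
noncomputable def tau (n : ℕ) (μ : YPartition) : YPartition :=
  if h : ∃ it : ℕ × YPartition, ModRule n μ it.1 it.2 then h.choose.2 else μ

end YPartition

namespace YPartition

/-- The graph of the odd orthogonal (`O(1)`) modification rule: `ModRuleO μ i` holds iff
`i₁(μ) = i < ∞`.  Here one removes border strips of size `2ℓ(μ) - 1` containing the box
`(ℓ(μ), 1)`, and each removed strip with `c` columns contributes `c - 1`. -/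
inductive ModRuleO : YPartition → ℕ → Prop
  | base (μ : YPartition) (h : μ.len = 0) : ModRuleO μ 0
  | step (μ ν : YPartition) (i : ℕ)
      (hlen : 0 < μ.len)
      (hbs : IsBorderStrip μ ν)
      (hsize : stripSize μ ν = 2 * μ.len - 1)
      (hbox : (μ.len, 1) ∈ cells μ ν)
      (hrec : ModRuleO ν i) :
      ModRuleO μ (cols μ ν - 1 + i)

/-- `i₁(μ) ∈ ℕ∞`; it is `⊤ = ∞` exactly when the `O(1)` modification rule fails. -/
noncomputable def i1 (μ : YPartition) : ℕ∞ :=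
  sInf {c | ∃ i, ModRuleO μ i ∧ c = (i : ℕ∞)}

end YPartition

namespace YPartition

/-- The rank of a partition: the number of boxes on the main diagonal. -/
noncomputable def rank (p : YPartition) : ℕ := Set.ncard {i | 1 ≤ i ∧ i ≤ p.f i}

end YPartition

namespace YPartition

def IsSelfConj (p : YPartition) : Prop := ∀ j, p.f j = conjFun p.f j

theorem ext {p q : YPartition} (h : p.f = q.f) : p = q := by
  cases p; cases q; simpa using h

section Basic

variable (p : YPartition)

theorem support_finite : {i | p.f i ≠ 0}.Finite := by
  obtain ⟨N, hN⟩ := p.ev_zero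
  refine (Set.finite_Iio N).subset fun i hi => ?_
  by_contra h
  exact hi (hN i (not_lt.mp h))

variable {p}

theorem le_len {i : ℕ} (h : p.f i ≠ 0) : i ≤ p.len :=
  le_csSup p.support_finite.bddAbove h

theorem f_eq_zero_of_len_lt {i : ℕ} (h : p.len < i) : p.f i = 0 := by
  by_contra hi
  exact absurd (le_len hi) (not_le.mpr h)

theorem f_len_ne_zero (h : 0 < p.len) : p.f p.len ≠ 0 := by
  refine Nat.sSup_mem ?_ p.support_finite.bddAbove
  by_contra hempty
  rw [Set.not_nonempty_iff_eq_empty] at hempty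
  simp [len, hempty] at h

theorem f_pos {i : ℕ} (h1 : 1 ≤ i) (h2 : i ≤ p.len) : 0 < p.f i :=
  Nat.pos_of_ne_zero fun h0 =>
    f_len_ne_zero (by omega) (Nat.eq_zero_of_le_zero (h0 ▸ p.antitone h1 h2))

theorem le_f_iff_le_conjFun {i j : ℕ} (hi : 1 ≤ i) (hj : 1 ≤ j) :
    j ≤ p.f i ↔ i ≤ conjFun p.f j := by
  have hfin : {k | 1 ≤ k ∧ j ≤ p.f k}.Finite :=
    p.support_finite.subset fun k ⟨_, hjk⟩ => show p.f k ≠ 0 by omega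
  constructor
  · intro h
    have hsub : Set.Icc 1 i ⊆ {k | 1 ≤ k ∧ j ≤ p.f k} := fun k hk =>
      ⟨hk.1, h.trans (p.antitone hk.1 hk.2)⟩
    simpa [conjFun] using Set.ncard_le_ncard hsub hfin
  · intro h
    by_contra hlt
    have hsub : {k | 1 ≤ k ∧ j ≤ p.f k} ⊆ Set.Ico 1 i := fun k ⟨hk, hjk⟩ =>
      ⟨hk, not_le.mp fun hik => hlt (hjk.trans (p.antitone hi hik))⟩
    have : conjFun p.f j ≤ i - 1 := by
      simpa [conjFun] using Set.ncard_le_ncard hsub (Set.finite_Ico _ _)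
    omega

theorem conjFun_zero (g : ℕ → ℕ) : conjFun g 0 = 0 := by
  simpa [conjFun, Set.Ici] using (Set.Ici_infinite 1).ncard

theorem isSelfConj_iff :
    p.IsSelfConj ↔ ∀ i j, 1 ≤ i → 1 ≤ j → (j ≤ p.f i ↔ i ≤ p.f j) := by
  refine ⟨fun hp i j hi hj => by rw [le_f_iff_le_conjFun hi hj, ← hp j], fun h j => ?_⟩
  rcases Nat.eq_zero_or_pos j with rfl | hj
  · rw [p.f_zero, conjFun_zero]
  refine eq_of_forall_le_iff fun i => ?_
  rcases Nat.eq_zero_or_pos i with rfl | hi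
  · simp
  · rw [← h i j hi hj, le_f_iff_le_conjFun hi hj]

theorem IsSelfConj.f_one (hp : p.IsSelfConj) : p.f 1 = p.len := by
  rcases Nat.eq_zero_or_pos p.len with h0 | hpos
  · rw [h0, f_eq_zero_of_len_lt (by omega)]
  have h1 : 1 ≤ p.f 1 := f_pos le_rfl hpos
  have hcomm := isSelfConj_iff.mp hp
  refine le_antisymm (le_len ?_) ?_
  · exact Nat.one_le_iff_ne_zero.mp ((hcomm _ _ h1 le_rfl).mpr le_rfl)
  · exact (hcomm _ _ le_rfl hpos).mpr (f_pos hpos le_rfl)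

theorem rank_eq_zero_of_len_eq_zero (h0 : p.len = 0) : p.rank = 0 := by
  have hdiag : {i | 1 ≤ i ∧ i ≤ p.f i} = ∅ :=
    Set.eq_empty_of_forall_notMem fun i ⟨hi, hle⟩ => by
      rw [f_eq_zero_of_len_lt (by omega)] at hle
      omega
  rw [rank, hdiag, Set.ncard_empty]

end Basic

theorem mem_cells {μ ν : YPartition} {i j : ℕ} :
    (i, j) ∈ cells μ ν ↔ 1 ≤ i ∧ ν.f i < j ∧ j ≤ μ.f i :=
  Iff.rfl

section Sums

variable {μ ν : YPartition} {L : ℕ}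

theorem size_eq_sum_range (hL : ∀ i, L < i → μ.f i = 0) :
    μ.size = ∑ i ∈ Finset.range L, μ.f (i + 1) := by
  have hsupp : Function.support μ.f ⊆ ↑((Finset.range L).image (· + 1)) := by
    intro i hi
    have hi0 : i ≠ 0 := fun h => hi (h ▸ μ.f_zero)
    have : i ≤ L := not_lt.mp fun h => hi (hL i h)
    simp only [Finset.coe_image, Finset.coe_range, Set.mem_image, Set.mem_Iio]
    exact ⟨i - 1, by omega, by omega⟩
  rw [size, finsum_eq_sum_of_support_subset _ hsupp, Finset.sum_image (by simp)]

theorem stripSize_eq_sum_range (hL : ∀ i, L < i → μ.f i = 0) :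
    stripSize μ ν = ∑ i ∈ Finset.range L, (μ.f (i + 1) - ν.f (i + 1)) := by
  have hcells : cells μ ν = ↑((Finset.range L).biUnion fun i =>
      (Finset.Ioc (ν.f (i + 1)) (μ.f (i + 1))).image (Prod.mk (i + 1))) := by
    ext ⟨i, j⟩
    simp only [mem_cells, Finset.coe_biUnion, Finset.coe_range, Set.mem_Iio,
      Finset.coe_image, Finset.coe_Ioc, Set.mem_iUnion, Set.mem_image, Set.mem_Ioc, Prod.mk.injEq]
    constructor
    · rintro ⟨hi, hlt, hle⟩
      have : i ≤ L := not_lt.mp fun h => by rw [hL i h] at hle; omega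
      exact ⟨i - 1, by omega, j, by grind⟩
    · rintro ⟨i, hi, j, hj, rfl, rfl⟩
      exact ⟨by omega, hj⟩
  rw [stripSize, hcells, Set.ncard_coe_finset, Finset.card_biUnion]
  · simp [Finset.card_image_of_injective _ (Prod.mk_right_injective _)]
  · intro a _ b _ hab
    simp only [Function.onFun, Finset.disjoint_left, Finset.mem_image]
    rintro _ ⟨_, _, rfl⟩ ⟨_, _, h⟩
    exact hab (Nat.succ_injective (Prod.mk.inj h).1.symm)

theorem size_eq_size_add_stripSize (h : Sub ν μ) : μ.size = ν.size + stripSize μ ν := by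
  have hL : ∀ i, μ.len < i → μ.f i = 0 := fun _ => f_eq_zero_of_len_lt
  rw [size_eq_sum_range hL, size_eq_sum_range fun i hi => Nat.eq_zero_of_le_zero (hL i hi ▸ h i),
    stripSize_eq_sum_range hL, ← Finset.sum_add_distrib]
  exact Finset.sum_congr rfl fun i _ => (Nat.add_sub_of_le (h _)).symm

theorem eq_of_sub_of_size_le (h : Sub ν μ) (hs : μ.size ≤ ν.size) : ν = μ := by
  have hstrip : stripSize μ ν = 0 := by
    have := size_eq_size_add_stripSize h
    omega
  rw [stripSize_eq_sum_range fun _ => f_eq_zero_of_len_lt, Finset.sum_eq_zero_iff] at hstrip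
  refine ext (funext fun i => ?_)
  have hle := h i
  rcases i with _ | i
  · simp [f_zero]
  by_cases hi : i < μ.len
  · have := hstrip i (Finset.mem_range.mpr hi)
    omega
  · have := f_eq_zero_of_len_lt (p := μ) (i := i + 1) (by omega)
    omega

theorem size_eq_zero_of_len_eq_zero (h0 : μ.len = 0) : μ.size = 0 := by
  simp [size_eq_sum_range (L := 0) fun _ => f_eq_zero_of_len_lt ∘ h0.trans_lt]

end Sums

section Rim

variable (p : YPartition)

/-- `λ / removeRim λ` is the rim of `λ`, the cells `(i, j)` with `λ_{i+1} ≤ j ≤ λ_i`; as a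
partition, `removeRim λ` is `λ` with its first row and first column deleted. -/
def removeRim : YPartition where
  f i := if i = 0 then 0 else p.f (i + 1) - 1
  f_zero := rfl
  antitone i j hi hij := by
    rw [if_neg (by omega), if_neg (by omega)]
    exact Nat.sub_le_sub_right (p.antitone (by omega) (by omega)) 1
  ev_zero := by
    obtain ⟨N, hN⟩ := p.ev_zero
    refine ⟨N, fun i hi => ?_⟩
    split_ifs
    · rfl
    · rw [hN (i + 1) (by omega)]

variable {p}

theorem removeRim_f_succ (i : ℕ) : (removeRim p).f (i + 1) = p.f (i + 1 + 1) - 1 := rfl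

theorem removeRim_sub : Sub (removeRim p) p := by
  rintro (_ | i)
  · exact Nat.zero_le _
  · rw [removeRim_f_succ]
    have := p.antitone (by omega : 1 ≤ i + 1) (by omega : i + 1 ≤ i + 1 + 1)
    omega

theorem mem_cells_removeRim {i j : ℕ} :
    (i, j) ∈ cells p (removeRim p) ↔ 1 ≤ i ∧ 1 ≤ j ∧ p.f (i + 1) ≤ j ∧ j ≤ p.f i := by
  rw [mem_cells]
  rcases i with _ | i
  · simp
  · rw [removeRim_f_succ]
    omega

theorem size_eq_size_removeRim_add (hpos : 0 < p.len) :
    p.size = (removeRim p).size + (p.f 1 + p.len - 1) := by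
  obtain ⟨m, hm⟩ : ∃ m, p.len = m + 1 := ⟨p.len - 1, by omega⟩
  have hL : ∀ i, m + 1 < i → p.f i = 0 := fun i hi => f_eq_zero_of_len_lt (by omega)
  have hL' : ∀ i, m < i → (removeRim p).f i = 0 := by
    rintro (_ | i) hi
    · rfl
    · rw [removeRim_f_succ, hL (i + 1 + 1) (by omega)]
  have hpos' : ∀ i ∈ Finset.range m, p.f (i + 1 + 1) - 1 + 1 = p.f (i + 1 + 1) := fun i hi =>
    Nat.sub_add_cancel (f_pos (by omega) (by rw [Finset.mem_range] at hi; omega))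
  rw [size_eq_sum_range hL, size_eq_sum_range hL', Finset.sum_range_succ',
    ← Finset.sum_congr rfl hpos', Finset.sum_add_distrib]
  simp only [removeRim_f_succ, Finset.sum_const, Finset.card_range, smul_eq_mul, mul_one, zero_add]
  omega

theorem stripSize_removeRim (hpos : 0 < p.len) :
    stripSize p (removeRim p) = p.f 1 + p.len - 1 := by
  have := size_eq_size_add_stripSize (removeRim_sub (p := p))
  have := size_eq_size_removeRim_add hpos
  omega

theorem rank_eq_rank_removeRim_add_one (hpos : 0 < p.len) :
    p.rank = (removeRim p).rank + 1 := by
  have hdiag : {i | 1 ≤ i ∧ i ≤ p.f i} =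
      insert 1 ((· + 1) '' {i | 1 ≤ i ∧ i ≤ (removeRim p).f i}) := by
    ext (_ | _ | i)
    · simp
    · simpa using Nat.succ_le_of_lt (f_pos le_rfl hpos)
    · simp [removeRim_f_succ]
      omega
  have hfin : {i | 1 ≤ i ∧ i ≤ (removeRim p).f i}.Finite :=
    (removeRim p).support_finite.subset fun i ⟨_, hi⟩ => show _ ≠ 0 by omega
  rw [rank, rank, hdiag, Set.ncard_insert_of_notMem (by simp) (hfin.image _),
    Set.ncard_image_of_injective _ (add_left_injective 1)]

theorem cols_removeRim : cols p (removeRim p) = p.f 1 := by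
  have hcols : Prod.snd '' cells p (removeRim p) = Set.Icc 1 (p.f 1) := by
    ext j
    simp only [Set.mem_image, Set.mem_Icc, Prod.exists, exists_eq_right, mem_cells_removeRim]
    constructor
    · rintro ⟨i, hi, hj, -, hji⟩
      exact ⟨hj, hji.trans (p.antitone le_rfl hi)⟩
    · rintro ⟨hj, hj1⟩
      -- the rim meets column `j` in row `λ†_j`
      have hrow := (le_f_iff_le_conjFun le_rfl hj).mp hj1
      refine ⟨conjFun p.f j, hrow, hj, ?_, (le_f_iff_le_conjFun hrow hj).mpr le_rfl⟩
      have := (le_f_iff_le_conjFun (p := p) (by omega : 1 ≤ conjFun p.f j + 1) hj).not.mpr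
        (by omega)
      omega
  rw [cols, hcols]
  simp

theorem len_one_mem_cells_removeRim (hpos : 0 < p.len) :
    (p.len, 1) ∈ cells p (removeRim p) := by
  rw [mem_cells_removeRim, f_eq_zero_of_len_lt (Nat.lt_succ_self _)]
  exact ⟨hpos, le_rfl, Nat.zero_le _, f_pos hpos le_rfl⟩

theorem reflTransGen_len_one_of_mem_cells_removeRim {c : ℕ × ℕ}
    (hc : c ∈ cells p (removeRim p)) :
    Relation.ReflTransGen
      (fun x y => x ∈ cells p (removeRim p) ∧ y ∈ cells p (removeRim p) ∧ Adj x y)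
      c (p.len, 1) := by
  induction hn : 2 * (p.len - c.1) + c.2 using Nat.strong_induction_on generalizing c with
  | _ n ih =>
  obtain ⟨i, j⟩ := c
  have hc' := mem_cells_removeRim.mp hc
  have hi : i ≤ p.len := le_len (by omega)
  -- walk left along the row while possible, otherwise step down; this ends at `(ℓ(λ), 1)`
  by_cases hleft : (i, j - 1) ∈ cells p (removeRim p)
  · have hleft' := mem_cells_removeRim.mp hleft
    exact .head ⟨hc, hleft, Or.inl ⟨rfl, Or.inr (by omega)⟩⟩ (ih _ (by omega) hleft rfl)
  rw [mem_cells_removeRim] at hleft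
  by_cases hlast : i = p.len
  · subst hlast
    have := f_eq_zero_of_len_lt (by omega : p.len < p.len + 1)
    obtain rfl : j = 1 := by omega
    exact .refl
  have hnext := f_pos (by omega : 1 ≤ i + 1) (by omega : i + 1 ≤ p.len)
  have hdown : (i + 1, j) ∈ cells p (removeRim p) := by
    rw [mem_cells_removeRim]
    have := p.antitone (by omega : 1 ≤ i + 1) (by omega : i + 1 ≤ i + 1 + 1)
    omega
  exact .head ⟨hc, hdown, Or.inr ⟨rfl, Or.inl rfl⟩⟩ (ih _ (by omega) hdown rfl)

theorem isBorderStrip_removeRim (hpos : 0 < p.len) : IsBorderStrip p (removeRim p) := by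
  refine ⟨removeRim_sub, ⟨_, len_one_mem_cells_removeRim hpos⟩, fun a ha b hb => ?_, ?_⟩
  · have hsymm : Std.Symm (fun x y => x ∈ cells p (removeRim p) ∧ y ∈ cells p (removeRim p) ∧
        Adj x y) := ⟨fun _ _ ⟨hx, hy, hxy⟩ => ⟨hy, hx, by unfold Adj at *; tauto⟩⟩
    exact (reflTransGen_len_one_of_mem_cells_removeRim ha).trans
      (Relation.ReflTransGen.stdSymm.symm _ _ (reflTransGen_len_one_of_mem_cells_removeRim hb))
  · rintro ⟨i, j, h₁, -, -, h₄⟩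
    rw [mem_cells_removeRim] at h₁ h₄
    omega

theorem removeRim_sub_of_isBorderStrip {ν : YPartition} (h : IsBorderStrip p ν) :
    Sub (removeRim p) ν := by
  obtain ⟨-, -, -, hsquare⟩ := h
  rintro (_ | i)
  · exact Nat.zero_le _
  rw [removeRim_f_succ]
  by_contra hlt
  -- otherwise the 2×2 square with corner `(i + 1, ν_{i+1} + 1)` lies in `λ/ν`
  have hrow := p.antitone (by omega : 1 ≤ i + 1) (by omega : i + 1 ≤ i + 1 + 1)
  have hν := ν.antitone (by omega : 1 ≤ i + 1) (by omega : i + 1 ≤ i + 1 + 1)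
  refine hsquare ⟨i + 1, ν.f (i + 1) + 1, ?_, ?_, ?_, ?_⟩ <;> rw [mem_cells] <;> omega

theorem eq_removeRim_of_isBorderStrip {ν : YPartition} (h : IsBorderStrip p ν)
    (hsize : stripSize p ν = stripSize p (removeRim p)) : ν = removeRim p := by
  have := size_eq_size_add_stripSize h.1
  have := size_eq_size_add_stripSize (removeRim_sub (p := p))
  exact (eq_of_sub_of_size_le (removeRim_sub_of_isBorderStrip h) (by omega)).symm

theorem isSelfConj_removeRim (hp : p.IsSelfConj) : (removeRim p).IsSelfConj := by
  rw [isSelfConj_iff] at hp ⊢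
  rintro (_ | i) (_ | j) hi hj
  · omega
  · omega
  · omega
  rw [removeRim_f_succ, removeRim_f_succ]
  have := hp (i + 1 + 1) (j + 1 + 1) (by omega) (by omega)
  omega

end Rim

section ModRuleO

variable {p : YPartition}

theorem i1_eq_of_forall_modRuleO_iff {i : ℕ} (h : ∀ j, ModRuleO p j ↔ j = i) : i1 p = i := by
  have : {c : ℕ∞ | ∃ j, ModRuleO p j ∧ c = j} = {(i : ℕ∞)} := by
    ext c
    simp [h]
  rw [i1, this, sInf_singleton]

theorem modRuleO_iff_of_len_eq_zero (h0 : p.len = 0) {j : ℕ} : ModRuleO p j ↔ j = 0 := by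
  refine ⟨fun hj => ?_, fun hj => hj ▸ .base p h0⟩
  cases hj with
  | base => rfl
  | step _ _ _ hlen => omega

theorem IsSelfConj.modRuleO_iff (hp : p.IsSelfConj) (hpos : 0 < p.len) {i : ℕ}
    (h : ∀ j, ModRuleO (removeRim p) j ↔ j = i) {j : ℕ} :
    ModRuleO p j ↔ j = p.len - 1 + i := by
  have hstrip : stripSize p (removeRim p) = 2 * p.len - 1 := by
    rw [stripSize_removeRim hpos, hp.f_one]
    omega
  have hcols : cols p (removeRim p) = p.len := cols_removeRim.trans hp.f_one
  constructor
  · intro hj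
    cases hj with
    | base _ h0 => omega
    | step _ ν i' _ hbs hsize _ hrec =>
      obtain rfl := eq_removeRim_of_isBorderStrip hbs (hsize.trans hstrip.symm)
      rw [hcols, (h i').mp hrec]
  · rintro rfl
    have := ModRuleO.step p _ i hpos (isBorderStrip_removeRim hpos) hstrip
      (len_one_mem_cells_removeRim hpos) ((h i).mpr rfl)
    rwa [hcols] at this

theorem IsSelfConj.exists_forall_modRuleO_iff (hp : p.IsSelfConj) :
    ∃ i, (∀ j, ModRuleO p j ↔ j = i) ∧ 2 * i + p.rank = p.size := by
  induction hn : p.size using Nat.strong_induction_on generalizing p with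
  | _ n ih =>
  rcases Nat.eq_zero_or_pos p.len with h0 | hpos
  · refine ⟨0, fun j => modRuleO_iff_of_len_eq_zero h0, ?_⟩
    rw [rank_eq_zero_of_len_eq_zero h0, ← hn, size_eq_zero_of_len_eq_zero h0]
  have hsize := size_eq_size_removeRim_add hpos
  have hrank := rank_eq_rank_removeRim_add_one hpos
  rw [hp.f_one] at hsize
  obtain ⟨i, hiff, hi⟩ := ih _ (by omega) (isSelfConj_removeRim hp) rfl
  exact ⟨p.len - 1 + i, fun j => hp.modRuleO_iff hpos hiff, by omega⟩

end ModRuleO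

end YPartition

open YPartition in
/-- For a self-conjugate partition `λ`, `i₁(λ) = (|λ| - rank(λ))/2`. -/
theorem statement11 (lam : YPartition) (hself : ∀ j : ℕ, lam.f j = conjFun lam.f j) :
    2 * i1 lam = ((lam.size - lam.rank : ℕ) : ℕ∞) := by
  obtain ⟨i, hiff, hi⟩ := IsSelfConj.exists_forall_modRuleO_iff hself
  rw [i1_eq_of_forall_modRuleO_iff hiff, show lam.size - lam.rank = 2 * i by omega]
  norm_cast
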